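/- arXiv:2207.02943 — 3 statements merged into one kernel-verified Lean document; each statement's English description precedes it below -/
import Mathlib

section
/- Let X be an n×p real matrix with full column rank and D an h×p real matrix with full row rank, h ≤ p. Then the trace of the matrix X(XᵀX)⁻¹Xᵀ − X(XᵀX)⁻¹Dᵀ(D(XᵀX)⁻¹Dᵀ)⁻¹D(XᵀX)⁻¹Xᵀ equals p − h. -/
/-!
Both terms are traces of idempotents of the form `A (C A)⁻¹ C`, whose trace is the size of
`C A` by cyclicity. For the first take `A = X`, `C = Xᵀ`; for the second, with `S = (XᵀX)⁻¹`,
take `A = X S Dᵀ`, `C = D S Xᵀ`, so that `C A = D S Dᵀ`. Full rank makes `XᵀX` and then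
`D S Dᵀ` positive definite, hence invertible.
-/

open Matrix

namespace Matrix

theorem mulVec_injective_iff_rank_eq_card {K m n : Type*} [Field K] [Fintype n]
    (A : Matrix m n K) : Function.Injective A.mulVec ↔ A.rank = Fintype.card n := by
  rw [mulVec_injective_iff, linearIndependent_iff_card_eq_finrank_span,
    rank_eq_finrank_span_cols, Set.finrank, eq_comm]

theorem trace_mul_inv_mul_eq_card {R m n : Type*} [CommRing R] [Fintype m] [Fintype n]
    [DecidableEq n] (A : Matrix m n R) (C : Matrix n m R) (hCA : IsUnit (C * A).det) :
    trace (A * (C * A)⁻¹ * C) = Fintype.card n := by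
  rw [trace_mul_cycle, mul_nonsing_inv _ hCA, trace_one]

end Matrix

theorem scm_constrained_ls_trace_general {n p h : ℕ}
    (X : Matrix (Fin n) (Fin p) ℝ) (D : Matrix (Fin h) (Fin p) ℝ)
    (hX : X.rank = p) (hD : D.rank = h) :
    Matrix.trace
      (X * (Xᵀ * X)⁻¹ * Xᵀ -
        X * (Xᵀ * X)⁻¹ * Dᵀ * (D * (Xᵀ * X)⁻¹ * Dᵀ)⁻¹ * D * (Xᵀ * X)⁻¹ * Xᵀ)
      = (p : ℝ) - (h : ℝ) := by
  set S := (Xᵀ * X)⁻¹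
  have hXinj : Function.Injective X.mulVec := by
    rw [mulVec_injective_iff_rank_eq_card, hX, Fintype.card_fin]
  have hDinj : Function.Injective Dᵀ.mulVec := by
    rw [mulVec_injective_iff_rank_eq_card, rank_transpose, hD, Fintype.card_fin]
  have hXX : (Xᵀ * X).PosDef := by
    simpa [conjTranspose_eq_transpose_of_trivial] using PosDef.conjTranspose_mul_self X hXinj
  have hM : (D * S * Dᵀ).PosDef := by
    simpa [conjTranspose_eq_transpose_of_trivial] using hXX.inv.conjTranspose_mul_mul_same hDinj
  have hXXdet : IsUnit (Xᵀ * X).det := (isUnit_iff_isUnit_det _).mp hXX.isUnit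
  have hCA : D * S * Xᵀ * (X * S * Dᵀ) = D * S * Dᵀ := by
    simp only [Matrix.mul_assoc]
    rw [← Matrix.mul_assoc Xᵀ, ← Matrix.mul_assoc S, nonsing_inv_mul _ hXXdet, Matrix.one_mul]
  have hsecond : X * S * Dᵀ * (D * S * Dᵀ)⁻¹ * D * S * Xᵀ =
      X * S * Dᵀ * (D * S * Xᵀ * (X * S * Dᵀ))⁻¹ * (D * S * Xᵀ) := by
    rw [hCA]; simp only [Matrix.mul_assoc]
  rw [trace_sub, hsecond, trace_mul_inv_mul_eq_card _ _ hXXdet,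
    trace_mul_inv_mul_eq_card _ _ (by rw [hCA]; exact (isUnit_iff_isUnit_det _).mp hM.isUnit),
    Fintype.card_fin, Fintype.card_fin]

theorem scm_constrained_ls_trace {n p h : ℕ} (hph : h ≤ p)
    (X : Matrix (Fin n) (Fin p) ℝ) (D : Matrix (Fin h) (Fin p) ℝ)
    (hX : X.rank = p) (hD : D.rank = h) :
    Matrix.trace
      (X * (Xᵀ * X)⁻¹ * Xᵀ -
        X * (Xᵀ * X)⁻¹ * Dᵀ * (D * (Xᵀ * X)⁻¹ * Dᵀ)⁻¹ * D * (Xᵀ * X)⁻¹ * Xᵀ)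
      = (p : ℝ) - (h : ℝ) :=
  scm_constrained_ls_trace_general X D hX hD
end

section
/- With the setup of the penalized constrained least squares problem with equality constraint D = 1_pᵀ and Z = 1 (sum-to-one constraint), the Jacobian of the fitted values Y ↦ Xβ̂(Y) equals (1+λ)(Π − (1/(1ᵀG⁻¹1)) X G⁻¹ 1 1ᵀ G⁻¹ Xᵀ), where G = XᵀX and Π = X G⁻¹ Xᵀ; consequently its trace equals (1+λ)(p − 1). -/
/-!
On the hyperplane `∑ β = 1` the penalty `∑ βᵢ ‖Y - Xᵢ‖²` is affine in `β`, so the objective is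
the quadratic `½ βᵀGβ - βᵀc(Y)` (plus a constant), with `G = XᵀX` and
`c(Y) = (1 + λ) XᵀY - (λ/2) diag G`. With `w = G⁻¹1`, `s = 1ᵀw` and `K = G⁻¹ - w wᵀ / s`, the
point `B(c) = K c + w / s` is feasible and stationary (`G B(c) ∈ c + ℝ1`), so by completing the
square it is the unique constrained minimizer. Hence `X β̂(Y) = (1 + λ) X K Xᵀ Y + const`, and
`tr (X K Xᵀ) = tr (G K) = tr (I - 1 wᵀ / s) = p - 1`.
-/

open Matrix

theorem Matrix.mulVec_injective_of_rank_eq_card {m k K : Type*} [Fintype k] [Field K]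
    {X : Matrix m k K} (hX : X.rank = Fintype.card k) : Function.Injective X.mulVec := by
  have hker : Module.finrank K (LinearMap.ker X.mulVecLin) = 0 := by
    have := LinearMap.finrank_range_add_finrank_ker X.mulVecLin
    rw [← Matrix.rank, hX, Module.finrank_fintype_fun_eq_card] at this
    omega
  rw [← coe_mulVecLin, ← LinearMap.ker_eq_bot]
  exact Submodule.finrank_eq_zero.mp hker

theorem Matrix.posDef_transpose_mul_self_of_rank_eq_card {m k : Type*} [Fintype m] [Fintype k]
    {X : Matrix m k ℝ} (hX : X.rank = Fintype.card k) : (Xᵀ * X).PosDef := by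
  simpa [conjTranspose_eq_transpose_of_trivial] using
    PosDef.conjTranspose_mul_self X (mulVec_injective_of_rank_eq_card hX)

section ConstrainedQuadratic

variable {k : Type*} [Fintype k]

theorem quadratic_eq_add_of_stationary {G : Matrix k k ℝ} {a B β c : k → ℝ} {μ : ℝ}
    (hG : G.IsSymm) (hB : G *ᵥ B = c - μ • a) (hβ : a ⬝ᵥ β = a ⬝ᵥ B) :
    β ⬝ᵥ G *ᵥ β / 2 - β ⬝ᵥ c
      = B ⬝ᵥ G *ᵥ B / 2 - B ⬝ᵥ c + (β - B) ⬝ᵥ G *ᵥ (β - B) / 2 := by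
  obtain ⟨u, rfl⟩ : ∃ u, β = B + u := ⟨β - B, by abel⟩
  have hu : u ⬝ᵥ a = 0 := by
    rw [dotProduct_add, add_eq_left] at hβ
    rw [dotProduct_comm, hβ]
  have hsymm : B ⬝ᵥ G *ᵥ u = u ⬝ᵥ G *ᵥ B := by
    rw [dotProduct_mulVec, ← mulVec_transpose, hG.eq, dotProduct_comm]
  have hstat : u ⬝ᵥ G *ᵥ B = u ⬝ᵥ c := by
    rw [hB, dotProduct_sub, dotProduct_smul, hu, smul_zero, sub_zero]
  simp only [add_sub_cancel_left, mulVec_add, dotProduct_add, add_dotProduct]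
  linarith

variable [DecidableEq k]

noncomputable def constrainedInverse (G : Matrix k k ℝ) (a : k → ℝ) : Matrix k k ℝ :=
  G⁻¹ - (1 / (a ⬝ᵥ G⁻¹ *ᵥ a)) • vecMulVec (G⁻¹ *ᵥ a) (G⁻¹ *ᵥ a)

/-- The minimizer of `β ⬝ᵥ G *ᵥ β / 2 - β ⬝ᵥ c` subject to `a ⬝ᵥ β = 1`. -/
noncomputable def constrainedMinimizer (G : Matrix k k ℝ) (a c : k → ℝ) : k → ℝ :=
  constrainedInverse G a *ᵥ c + (1 / (a ⬝ᵥ G⁻¹ *ᵥ a)) • (G⁻¹ *ᵥ a)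

theorem constrainedMinimizer_add (G : Matrix k k ℝ) (a c e : k → ℝ) :
    constrainedMinimizer G a (c + e)
      = constrainedInverse G a *ᵥ c + constrainedMinimizer G a e := by
  rw [constrainedMinimizer, constrainedMinimizer, mulVec_add, add_assoc]

variable {G : Matrix k k ℝ} {a : k → ℝ}

theorem mul_constrainedInverse (hG : IsUnit G) :
    G * constrainedInverse G a = 1 - (1 / (a ⬝ᵥ G⁻¹ *ᵥ a)) • vecMulVec a (G⁻¹ *ᵥ a) := by
  rw [constrainedInverse, Matrix.mul_sub, Matrix.mul_smul, mul_vecMulVec, mulVec_mulVec,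
    mul_nonsing_inv G ((isUnit_iff_isUnit_det G).mp hG), one_mulVec]

theorem vecMul_constrainedInverse (hG : G.IsSymm) (hs : a ⬝ᵥ G⁻¹ *ᵥ a ≠ 0) :
    a ᵥ* constrainedInverse G a = 0 := by
  have hGinv : a ᵥ* G⁻¹ = G⁻¹ *ᵥ a := by
    rw [← mulVec_transpose, transpose_nonsing_inv, hG.eq]
  rw [constrainedInverse, vecMul_sub, vecMul_smul, vecMul_vecMulVec, hGinv, smul_smul,
    one_div_mul_cancel hs, one_smul, sub_self]

theorem trace_mul_constrainedInverse (hG : IsUnit G) (hs : a ⬝ᵥ G⁻¹ *ᵥ a ≠ 0) :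
    trace (G * constrainedInverse G a) = Fintype.card k - 1 := by
  rw [mul_constrainedInverse hG, trace_sub, trace_one, trace_smul, trace_vecMulVec, smul_eq_mul,
    one_div_mul_cancel hs]

theorem mulVec_constrainedMinimizer (hG : IsUnit G) (c : k → ℝ) :
    G *ᵥ constrainedMinimizer G a c
      = c - (((G⁻¹ *ᵥ a) ⬝ᵥ c - 1) / (a ⬝ᵥ G⁻¹ *ᵥ a)) • a := by
  rw [constrainedMinimizer, mulVec_add, mulVec_mulVec, mul_constrainedInverse hG, sub_mulVec,
    one_mulVec, smul_mulVec, vecMulVec_mulVec, mulVec_smul, mulVec_mulVec,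
    mul_nonsing_inv G ((isUnit_iff_isUnit_det G).mp hG), one_mulVec]
  simp only [op_smul_eq_smul, smul_smul]
  module

theorem dotProduct_constrainedMinimizer (hG : G.IsSymm) (hs : a ⬝ᵥ G⁻¹ *ᵥ a ≠ 0)
    (c : k → ℝ) : a ⬝ᵥ constrainedMinimizer G a c = 1 := by
  rw [constrainedMinimizer, dotProduct_add, dotProduct_mulVec, vecMul_constrainedInverse hG hs,
    zero_dotProduct, zero_add, dotProduct_smul, smul_eq_mul, one_div_mul_cancel hs]

theorem eq_constrainedMinimizer_of_le (hG : G.PosDef) (ha : a ≠ 0) {β c : k → ℝ}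
    (hβ : a ⬝ᵥ β = 1)
    (hle : β ⬝ᵥ G *ᵥ β / 2 - β ⬝ᵥ c ≤
      constrainedMinimizer G a c ⬝ᵥ G *ᵥ constrainedMinimizer G a c / 2
        - constrainedMinimizer G a c ⬝ᵥ c) :
    β = constrainedMinimizer G a c := by
  have hsymm : G.IsSymm := isHermitian_iff_isSymm.mp hG.isHermitian
  have hs : a ⬝ᵥ G⁻¹ *ᵥ a ≠ 0 := (hG.inv.dotProduct_mulVec_pos ha).ne'
  rw [quadratic_eq_add_of_stationary hsymm (mulVec_constrainedMinimizer hG.isUnit c)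
    (by rw [hβ, dotProduct_constrainedMinimizer hsymm hs])] at hle
  by_contra hne
  have hpos := hG.dotProduct_mulVec_pos (sub_ne_zero.mpr hne)
  simp only [star_trivial] at hpos
  linarith

theorem mul_constrainedInverse_mul_transpose {m : Type*} (X : Matrix m k ℝ)
    (G : Matrix k k ℝ) (a : k → ℝ) :
    X * constrainedInverse G a * Xᵀ = X * G⁻¹ * Xᵀ
      - (1 / (a ⬝ᵥ G⁻¹ *ᵥ a)) • vecMulVec (X *ᵥ (G⁻¹ *ᵥ a)) (X *ᵥ (G⁻¹ *ᵥ a)) := by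
  rw [constrainedInverse, Matrix.mul_sub, Matrix.sub_mul, Matrix.mul_smul, Matrix.smul_mul,
    mul_vecMulVec, vecMulVec_mul, vecMul_transpose]

end ConstrainedQuadratic

section PenalizedObjective

variable {m k : Type*} [Fintype m] [Fintype k]

noncomputable def penalizedObjective (X : Matrix m k ℝ) (lam : ℝ) (Y : m → ℝ) (β : k → ℝ) :
    ℝ :=
  (1 / 2) * ((Y - X *ᵥ β) ⬝ᵥ (Y - X *ᵥ β)) + (lam / 2) * ∑ i, β i * ((Y - Xᵀ i) ⬝ᵥ (Y - Xᵀ i))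

theorem dotProduct_sub_mulVec_self (X : Matrix m k ℝ) (Y : m → ℝ) (β : k → ℝ) :
    (Y - X *ᵥ β) ⬝ᵥ (Y - X *ᵥ β) = Y ⬝ᵥ Y - 2 * (β ⬝ᵥ Xᵀ *ᵥ Y) + β ⬝ᵥ (Xᵀ * X) *ᵥ β := by
  rw [dotProduct_transpose_mulVec, ← mulVec_mulVec, dotProduct_transpose_mulVec,
    sub_dotProduct, dotProduct_sub, dotProduct_sub, dotProduct_comm (X *ᵥ β) Y]
  ring

theorem sum_mul_dotProduct_sub_col (X : Matrix m k ℝ) (Y : m → ℝ) (β : k → ℝ) :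
    ∑ i, β i * ((Y - Xᵀ i) ⬝ᵥ (Y - Xᵀ i))
      = (∑ i, β i) * (Y ⬝ᵥ Y) - 2 * (β ⬝ᵥ Xᵀ *ᵥ Y) + β ⬝ᵥ (Xᵀ * X).diag := by
  have hcol (i : k) : (Y - Xᵀ i) ⬝ᵥ (Y - Xᵀ i)
      = Y ⬝ᵥ Y - 2 * (Xᵀ *ᵥ Y) i + (Xᵀ * X).diag i := by
    change _ = Y ⬝ᵥ Y - 2 * (Xᵀ i ⬝ᵥ Y) + Xᵀ i ⬝ᵥ Xᵀ i
    rw [sub_dotProduct, dotProduct_sub, dotProduct_sub, dotProduct_comm Y (Xᵀ i)]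
    ring
  calc ∑ i, β i * ((Y - Xᵀ i) ⬝ᵥ (Y - Xᵀ i))
      = ∑ i, (β i * (Y ⬝ᵥ Y) - 2 * (β i * (Xᵀ *ᵥ Y) i) + β i * (Xᵀ * X).diag i) :=
        Finset.sum_congr rfl fun i _ => by rw [hcol]; ring
    _ = _ := by
        rw [Finset.sum_add_distrib, Finset.sum_sub_distrib, ← Finset.sum_mul, ← Finset.mul_sum]
        rfl

theorem penalizedObjective_of_sum_eq_one (X : Matrix m k ℝ) (lam : ℝ) (Y : m → ℝ)
    {β : k → ℝ} (hβ : ∑ i, β i = 1) :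
    penalizedObjective X lam Y β
      = β ⬝ᵥ (Xᵀ * X) *ᵥ β / 2 - β ⬝ᵥ ((1 + lam) • (Xᵀ *ᵥ Y) - (lam / 2) • (Xᵀ * X).diag)
        + (1 + lam) / 2 * (Y ⬝ᵥ Y) := by
  rw [penalizedObjective, dotProduct_sub_mulVec_self, sum_mul_dotProduct_sub_col, hβ,
    dotProduct_sub, dotProduct_smul, dotProduct_smul, smul_eq_mul, smul_eq_mul]
  ring

end PenalizedObjective

theorem penalized_sum_to_one_jacobian_general {n p : ℕ}
    (X : Matrix (Fin n) (Fin p) ℝ) (hX : X.rank = p) (lam : ℝ)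
    (βhat : (Fin n → ℝ) → (Fin p → ℝ))
    (hfeas : ∀ Y, ∑ i, βhat Y i = 1)
    (hmin : ∀ Y β, (∑ i, β i) = 1 →
      (1/2) * ((Y - X *ᵥ βhat Y) ⬝ᵥ (Y - X *ᵥ βhat Y))
        + (lam/2) * ∑ i, βhat Y i * ((Y - Xᵀ i) ⬝ᵥ (Y - Xᵀ i)) ≤
      (1/2) * ((Y - X *ᵥ β) ⬝ᵥ (Y - X *ᵥ β))
        + (lam/2) * ∑ i, β i * ((Y - Xᵀ i) ⬝ᵥ (Y - Xᵀ i))) :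
    (∃ c : Fin n → ℝ, ∀ Y : Fin n → ℝ,
      X *ᵥ βhat Y =
        ((1 + lam) • (X * (Xᵀ * X)⁻¹ * Xᵀ
          - (1 / ((1 : Fin p → ℝ) ⬝ᵥ ((Xᵀ * X)⁻¹ *ᵥ (1 : Fin p → ℝ)))) •
            vecMulVec (X *ᵥ ((Xᵀ * X)⁻¹ *ᵥ (1 : Fin p → ℝ)))
              (X *ᵥ ((Xᵀ * X)⁻¹ *ᵥ (1 : Fin p → ℝ))))) *ᵥ Y + c) ∧
    Matrix.trace
      ((1 + lam) • (X * (Xᵀ * X)⁻¹ * Xᵀ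
        - (1 / ((1 : Fin p → ℝ) ⬝ᵥ ((Xᵀ * X)⁻¹ *ᵥ (1 : Fin p → ℝ)))) •
          vecMulVec (X *ᵥ ((Xᵀ * X)⁻¹ *ᵥ (1 : Fin p → ℝ)))
            (X *ᵥ ((Xᵀ * X)⁻¹ *ᵥ (1 : Fin p → ℝ)))))
      = (1 + lam) * ((p : ℝ) - 1) := by
  have hG : (Xᵀ * X).PosDef :=
    posDef_transpose_mul_self_of_rank_eq_card (hX.trans (Fintype.card_fin p).symm)
  have hone : (1 : Fin p → ℝ) ≠ 0 := fun h => by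
    simpa [← one_dotProduct, h] using hfeas 0
  have hs : (1 : Fin p → ℝ) ⬝ᵥ (Xᵀ * X)⁻¹ *ᵥ 1 ≠ 0 := (hG.inv.dotProduct_mulVec_pos hone).ne'
  rw [← mul_constrainedInverse_mul_transpose]
  refine ⟨⟨X *ᵥ constrainedMinimizer (Xᵀ * X) 1 (-((lam / 2) • (Xᵀ * X).diag)), fun Y => ?_⟩, ?_⟩
  · set B := constrainedMinimizer (Xᵀ * X) 1 ((1 + lam) • (Xᵀ *ᵥ Y) - (lam / 2) • (Xᵀ * X).diag)
      with hB_def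
    have hB : ∑ i, B i = 1 := by
      rw [← one_dotProduct]
      exact dotProduct_constrainedMinimizer (isHermitian_iff_isSymm.mp hG.isHermitian) hs _
    have hle : penalizedObjective X lam Y (βhat Y) ≤ penalizedObjective X lam Y B := hmin Y B hB
    rw [penalizedObjective_of_sum_eq_one X lam Y (hfeas Y),
      penalizedObjective_of_sum_eq_one X lam Y hB] at hle
    have hβ : βhat Y = B :=
      eq_constrainedMinimizer_of_le hG hone (by rw [one_dotProduct, hfeas]) (by linarith)
    rw [hβ, hB_def, sub_eq_add_neg, constrainedMinimizer_add]
    simp only [mulVec_add, mulVec_smul, smul_mulVec, mulVec_mulVec, Matrix.mul_assoc]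
  · rw [trace_smul, trace_mul_cycle, trace_mul_constrainedInverse hG.isUnit hs, Fintype.card_fin,
      smul_eq_mul]

/-- Jacobian and trace (degrees of freedom) of the penalized synthetic control
fit with sum-to-one constraint (no covariates): (1+λ)(Π − b bᵀ/(1ᵀG⁻¹1)),
with trace (1+λ)(p−1). -/
theorem penalized_sum_to_one_jacobian {n p : ℕ}
    (X : Matrix (Fin n) (Fin p) ℝ) (hX : X.rank = p) (lam : ℝ) (hlam : 0 ≤ lam)
    (βhat : (Fin n → ℝ) → (Fin p → ℝ))
    (hfeas : ∀ Y, ∑ i, βhat Y i = 1)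
    (hmin : ∀ Y β, (∑ i, β i) = 1 →
      (1/2) * ((Y - X *ᵥ βhat Y) ⬝ᵥ (Y - X *ᵥ βhat Y))
        + (lam/2) * ∑ i, βhat Y i * ((Y - Xᵀ i) ⬝ᵥ (Y - Xᵀ i)) ≤
      (1/2) * ((Y - X *ᵥ β) ⬝ᵥ (Y - X *ᵥ β))
        + (lam/2) * ∑ i, β i * ((Y - Xᵀ i) ⬝ᵥ (Y - Xᵀ i))) :
    (∃ c : Fin n → ℝ, ∀ Y : Fin n → ℝ,
      X *ᵥ βhat Y =
        ((1 + lam) • (X * (Xᵀ * X)⁻¹ * Xᵀ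
          - (1 / ((1 : Fin p → ℝ) ⬝ᵥ ((Xᵀ * X)⁻¹ *ᵥ (1 : Fin p → ℝ)))) •
            vecMulVec (X *ᵥ ((Xᵀ * X)⁻¹ *ᵥ (1 : Fin p → ℝ)))
              (X *ᵥ ((Xᵀ * X)⁻¹ *ᵥ (1 : Fin p → ℝ))))) *ᵥ Y + c) ∧
    Matrix.trace
      ((1 + lam) • (X * (Xᵀ * X)⁻¹ * Xᵀ
        - (1 / ((1 : Fin p → ℝ) ⬝ᵥ ((Xᵀ * X)⁻¹ *ᵥ (1 : Fin p → ℝ)))) •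
          vecMulVec (X *ᵥ ((Xᵀ * X)⁻¹ *ᵥ (1 : Fin p → ℝ)))
            (X *ᵥ ((Xᵀ * X)⁻¹ *ᵥ (1 : Fin p → ℝ)))))
      = (1 + lam) * ((p : ℝ) - 1) :=
  penalized_sum_to_one_jacobian_general X hX lam βhat hfeas hmin
end

section
/- Block matrix rank identity: Let A ∈ ℝ^{m×n}, B ∈ ℝ^{s×t}, C ∈ ℝ^{m×t}, and let A⁻ and B⁻ be generalized inverses satisfying AA⁻A = A and BB⁻B = B. Then rank of the block upper-triangular matrix [[A, C],[0, B]] equals rank(A) + rank(B) if and only if (I_m − AA⁻)C(I_t − B⁻B) = 0. -/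
/-!
Write `P = A A⁻` and `Q = I - B⁻B`; both are idempotent, `P A = A` and `B Q = 0`. Invertible
block row and column operations replace `C` by `C - A X - Y B` without changing the rank, and
with `X = A⁻C`, `Y = (I - P) C B⁻` this turns `C` into `D = (I - P) C Q`. Now `P D = 0` and
`D Q = D` separate the column spaces of the two block columns of `[[A, D], [0, B]]` and the row
spaces of `D` and `B`, so its rank is `rank A + rank D + rank B`. Hence the rank identity holds
iff `rank D = 0`, i.e. `D = 0`.
-/

open Matrix

namespace Matrix

section Semiring

variable {R : Type*} [Semiring R] {m n : Type*} [Fintype m] [Fintype n]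
  {A : Matrix m n R} {G : Matrix n m R}

lemma isIdempotentElem_mul_of_mul_mul_eq (h : A * G * A = A) : IsIdempotentElem (A * G) := by
  rw [IsIdempotentElem, ← Matrix.mul_assoc, h]

lemma isIdempotentElem_mul_of_mul_mul_eq' (h : A * G * A = A) : IsIdempotentElem (G * A) := by
  rw [IsIdempotentElem, Matrix.mul_assoc, ← Matrix.mul_assoc A, h]

end Semiring

section CommSemiring

variable {R : Type*} [CommSemiring R] {m n o : Type*} [Fintype n] [Fintype o]

lemma range_mulVecLin_fromCols (X : Matrix m n R) (Y : Matrix m o R) :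
    (fromCols X Y).mulVecLin.range = X.mulVecLin.range ⊔ Y.mulVecLin.range := by
  have hcol : (fromCols X Y).col = Sum.elim X.col Y.col := by
    ext (_ | _) <;> rfl
  rw [range_mulVecLin, range_mulVecLin, range_mulVecLin, hcol, Set.Sum.elim_range,
    Submodule.span_union]

lemma disjoint_range_mulVecLin_of_mul_eq [Fintype m] {X : Matrix m n R} {Y : Matrix m o R}
    {P : Matrix m m R} (hX : P * X = X) (hY : P * Y = 0) :
    Disjoint X.mulVecLin.range Y.mulVecLin.range := by
  rw [Submodule.disjoint_def]
  rintro v ⟨x, rfl⟩ ⟨y, hy⟩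
  calc X *ᵥ x = P *ᵥ (X *ᵥ x) := by rw [mulVec_mulVec, hX]
    _ = P *ᵥ (Y *ᵥ y) := congrArg (P *ᵥ ·) hy.symm
    _ = 0 := by rw [mulVec_mulVec, hY, zero_mulVec]

end CommSemiring

section CommRing

variable {R : Type*} [CommRing R] {m n o p : Type*} [Fintype m] [Fintype n] [Fintype o] [Fintype p]
  [DecidableEq m] [DecidableEq n] [DecidableEq o] [DecidableEq p]

lemma rank_fromBlocks_zero₂₁_sub_mul (A : Matrix m n R) (B : Matrix o p R) (C : Matrix m p R)
    (X : Matrix n p R) (Y : Matrix m o R) :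
    (fromBlocks A (C - A * X - Y * B) 0 B).rank = (fromBlocks A C 0 B).rank := by
  have hcancel : fromBlocks (1 : Matrix m m R) (-Y) 0 (1 : Matrix o o R) * fromBlocks A C 0 B *
      fromBlocks (1 : Matrix n n R) (-X) 0 (1 : Matrix p p R) =
        fromBlocks A (C - A * X - Y * B) 0 B := by
    simp only [fromBlocks_multiply, Matrix.one_mul, Matrix.mul_one, Matrix.zero_mul,
      Matrix.mul_zero, Matrix.neg_mul, Matrix.mul_neg, neg_zero, add_zero, zero_add]
    congr 1
    abel
  rw [← hcancel, rank_mul_eq_left_of_isUnit_det, rank_mul_eq_right_of_isUnit_det] <;>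
    simp

end CommRing

section Field

variable {K : Type*} [Field K] {m n o p : Type*} [Fintype n] [Fintype o] [Fintype p]

lemma rank_eq_zero_iff [DecidableEq n] {A : Matrix m n K} : A.rank = 0 ↔ A = 0 := by
  rw [rank, Submodule.finrank_eq_zero, LinearMap.range_eq_bot, ← toLin'_apply',
    LinearEquiv.map_eq_zero_iff]

variable [Fintype m]

lemma rank_fromCols_of_mul_eq {X : Matrix m n K} {Y : Matrix m o K} {P : Matrix m m K}
    (hX : P * X = X) (hY : P * Y = 0) :
    (fromCols X Y).rank = X.rank + Y.rank := by
  have hsum := Submodule.finrank_sup_add_finrank_inf_eq X.mulVecLin.range Y.mulVecLin.range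
  rw [disjoint_iff.mp (disjoint_range_mulVecLin_of_mul_eq hX hY), finrank_bot, add_zero] at hsum
  rw [rank, rank, rank, range_mulVecLin_fromCols, hsum]

lemma rank_fromRows_of_mul_eq {X : Matrix m p K} {Y : Matrix n p K} {Q : Matrix p p K}
    (hX : X * Q = X) (hY : Y * Q = 0) :
    (fromRows X Y).rank = X.rank + Y.rank := by
  rw [← rank_transpose, transpose_fromRows, ← rank_transpose X, ← rank_transpose Y]
  exact rank_fromCols_of_mul_eq (P := Qᵀ) (by rw [← transpose_mul, hX])
    (by rw [← transpose_mul, hY, transpose_zero])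

lemma rank_fromBlocks_zero₂₁_of_mul_eq [DecidableEq n] {A : Matrix m n K} {B : Matrix o p K}
    {D : Matrix m p K} {P : Matrix m m K} {Q : Matrix p p K}
    (hPA : P * A = A) (hPD : P * D = 0) (hDQ : D * Q = D) (hBQ : B * Q = 0) :
    (fromBlocks A D 0 B).rank = A.rank + D.rank + B.rank := by
  have hA : (fromRows A (0 : Matrix o n K)).rank = A.rank := by
    rw [rank_fromRows_of_mul_eq (Q := 1) (Matrix.mul_one A) (Matrix.zero_mul 1), rank_zero,
      add_zero]
  rw [← fromCols_fromRows_eq_fromBlocks, rank_fromCols_of_mul_eq (P := fromBlocks P 0 0 0),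
    hA, rank_fromRows_of_mul_eq hDQ hBQ, add_assoc]
  · simp [fromBlocks_mul_fromRows, hPA]
  · simp [fromBlocks_mul_fromRows, hPD]

end Field

end Matrix

theorem blockTriangular_rank_eq_iff {m n s t : ℕ}
    (A : Matrix (Fin m) (Fin n) ℝ) (B : Matrix (Fin s) (Fin t) ℝ)
    (C : Matrix (Fin m) (Fin t) ℝ)
    (Aminus : Matrix (Fin n) (Fin m) ℝ) (hA : A * Aminus * A = A)
    (Bminus : Matrix (Fin t) (Fin s) ℝ) (hB : B * Bminus * B = B) :
    (Matrix.fromBlocks A C 0 B).rank = A.rank + B.rank ↔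
      (1 - A * Aminus) * C * (1 - Bminus * B) = 0 := by
  set D := (1 - A * Aminus) * C * (1 - Bminus * B)
  have hP := isIdempotentElem_mul_of_mul_mul_eq hA
  have hQ := (isIdempotentElem_mul_of_mul_mul_eq' hB).one_sub
  have hD : D = C - A * (Aminus * C) - ((1 - A * Aminus) * C * Bminus) * B := by
    simp only [D, Matrix.mul_sub, Matrix.sub_mul, Matrix.mul_one, Matrix.one_mul, Matrix.mul_assoc]
  have hPD : A * Aminus * D = 0 := by
    simp only [D, ← Matrix.mul_assoc, hP.mul_one_sub_self, Matrix.zero_mul]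
  have hDQ : D * (1 - Bminus * B) = D := by
    rw [Matrix.mul_assoc, hQ.eq]
  have hBQ : B * (1 - Bminus * B) = 0 := by
    rw [Matrix.mul_sub, Matrix.mul_one, ← Matrix.mul_assoc, hB, sub_self]
  have hrank : (fromBlocks A C 0 B).rank = A.rank + D.rank + B.rank := by
    rw [← rank_fromBlocks_zero₂₁_sub_mul A B C (Aminus * C) ((1 - A * Aminus) * C * Bminus),
      ← hD]
    exact rank_fromBlocks_zero₂₁_of_mul_eq hA hPD hDQ hBQ
  rw [hrank, ← Matrix.rank_eq_zero_iff]
  omega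
end
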